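/- arXiv:2205.03080 — 3 statements merged into one kernel-verified Lean document; each statement's English description precedes it below -/
import Mathlib

section
/- Let n, N, M, r be positive integers with N a multiple of n, say N = nK. Let Q be the n×N real matrix obtained by horizontally concatenating K copies of the n×n identity matrix. Let Kx be an N×N real symmetric positive definite matrix, S an r×r complex Hermitian positive definite matrix, H an r×M complex matrix and A an M×N complex matrix. Then for every n×r complex matrix W, the real number Re Tr[(W H A − Q) Kx (W H A − Q)ᴴ] + Re Tr[W S Wᴴ] is greater than or equal to Re Tr[Q (Kx⁻¹ + Aᴴ Hᴴ S⁻¹ H A)⁻¹ Qᵀ]. -/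
/-!
Completing the square: with `R = B K Bᴴ + S` and `W₀ = Q K Bᴴ R⁻¹` (the LMMSE estimator), the
error covariance is `(W - W₀) R (W - W₀)ᴴ + Q (K - K Bᴴ R⁻¹ B K) Qᴴ`. The first term is positive
semidefinite, and by the Woodbury identity the Schur complement `K - K Bᴴ R⁻¹ B K` equals
`(K⁻¹ + Bᴴ S⁻¹ B)⁻¹`.
-/

open Matrix
open scoped ComplexOrder

namespace Matrix

variable {m n p : Type*} [Fintype n] [Fintype p] [DecidableEq p]

theorem PosDef.map_ofReal [DecidableEq n] {𝕜 : Type*} [RCLike 𝕜] {A : Matrix n n ℝ}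
    (hA : A.PosDef) : (A.map (RCLike.ofReal : ℝ → 𝕜)).PosDef := by
  have hstar : Function.Semiconj (RCLike.ofReal : ℝ → 𝕜) star star := fun x => by simp
  obtain ⟨C, rfl⟩ : ∃ C : Matrix n n ℝ, A = star C * C := by
    open scoped MatrixOrder in
    exact CStarAlgebra.nonneg_iff_eq_star_mul_self.mp hA.posSemidef.nonneg
  have hmap : (star C * C).map (RCLike.ofReal : ℝ → 𝕜) =
      (C.map RCLike.ofReal)ᴴ * C.map RCLike.ofReal := by
    rw [← conjTranspose_map _ hstar, star_eq_conjTranspose]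
    exact Matrix.map_mul (f := RCLike.ofRealAm (K := 𝕜))
  rw [hmap]
  refine (posSemidef_conjTranspose_mul_self _).posDef_iff_det_ne_zero.mpr ?_
  rw [← hmap, ← RingHom.mapMatrix_apply, ← RingHom.map_det (algebraMap ℝ 𝕜)]
  exact (map_ne_zero _).mpr hA.det_pos.ne'

section CommRing

variable {α : Type*} [CommRing α] [StarRing α]

theorem inv_add_conjTranspose_mul_inv_mul_eq_sub [DecidableEq n] {K : Matrix n n α}
    {S : Matrix p p α} (B : Matrix p n α) (hK : IsUnit K) (hS : IsUnit S)
    (hR : IsUnit (B * K * Bᴴ + S)) :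
    (K⁻¹ + Bᴴ * S⁻¹ * B)⁻¹ = K - K * Bᴴ * (B * K * Bᴴ + S)⁻¹ * B * K := by
  have hKinv : IsUnit K⁻¹ := (isUnit_nonsing_inv_iff).mpr hK
  have hSinv : IsUnit S⁻¹ := (isUnit_nonsing_inv_iff).mpr hS
  rw [add_mul_mul_inv_eq_sub _ _ _ _ hKinv hSinv] <;>
    simp only [nonsing_inv_nonsing_inv _ ((isUnit_iff_isUnit_det _).mp hK),
      nonsing_inv_nonsing_inv _ ((isUnit_iff_isUnit_det _).mp hS), add_comm S, hR]

theorem sub_mul_mul_conjTranspose_add_eq (W : Matrix m p α) (B : Matrix p n α)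
    (Q : Matrix m n α) {K : Matrix n n α} {S R : Matrix p p α} (hK : K.IsHermitian)
    (hS : S.IsHermitian) (hRdef : B * K * Bᴴ + S = R) (hR : IsUnit R) :
    (W * B - Q) * K * (W * B - Q)ᴴ + W * S * Wᴴ =
      (W - Q * K * Bᴴ * R⁻¹) * R * (W - Q * K * Bᴴ * R⁻¹)ᴴ +
        Q * (K - K * Bᴴ * R⁻¹ * B * K) * Qᴴ := by
  have : Invertible R := hR.invertible
  have hRH : R⁻¹ᴴ = R⁻¹ := by
    rw [conjTranspose_nonsing_inv, ← hRdef, conjTranspose_add, conjTranspose_mul,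
      conjTranspose_mul, conjTranspose_conjTranspose, hK.eq, hS.eq, Matrix.mul_assoc]
  have hWR : W * (R * Wᴴ) = W * (B * (K * (Bᴴ * Wᴴ))) + W * (S * Wᴴ) := by
    simp only [← hRdef, Matrix.mul_add, Matrix.add_mul, Matrix.mul_assoc]
  simp only [conjTranspose_sub, conjTranspose_mul, hRH, hK.eq, conjTranspose_conjTranspose,
    Matrix.sub_mul, Matrix.mul_sub, Matrix.mul_assoc, mul_inv_cancel_left_of_invertible,
    inv_mul_cancel_left_of_invertible]
  rw [hWR]
  abel

end CommRing

variable {𝕜 : Type*} [RCLike 𝕜]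

theorem re_trace_mul_inv_add_le [Fintype m] [DecidableEq n] (W : Matrix m p 𝕜)
    (B : Matrix p n 𝕜) (Q : Matrix m n 𝕜) {K : Matrix n n 𝕜} {S : Matrix p p 𝕜} (hK : K.PosDef)
    (hS : S.PosDef) :
    RCLike.re (Q * (K⁻¹ + Bᴴ * S⁻¹ * B)⁻¹ * Qᴴ).trace ≤
      RCLike.re ((W * B - Q) * K * (W * B - Q)ᴴ + W * S * Wᴴ).trace := by
  have hR : (B * K * Bᴴ + S).PosDef :=
    .posSemidef_add (hK.posSemidef.mul_mul_conjTranspose_same B) hS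
  rw [inv_add_conjTranspose_mul_inv_mul_eq_sub B hK.isUnit hS.isUnit hR.isUnit,
    sub_mul_mul_conjTranspose_add_eq W B Q hK.isHermitian hS.isHermitian rfl hR.isUnit,
    trace_add, map_add, le_add_iff_nonneg_left]
  exact RCLike.nonneg_iff.mp ((hR.posSemidef.mul_mul_conjTranspose_same _).trace_nonneg) |>.1

end Matrix

theorem stmt1_general {n N M r : ℕ}
    (Q : Matrix (Fin n) (Fin N) ℝ)
    (Kx : Matrix (Fin N) (Fin N) ℝ) (hKx : Kx.PosDef)
    (S : Matrix (Fin r) (Fin r) ℂ) (hS : S.PosDef)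
    (H : Matrix (Fin r) (Fin M) ℂ) (A : Matrix (Fin M) (Fin N) ℂ) :
    ∀ W : Matrix (Fin n) (Fin r) ℂ,
      (Matrix.trace (Q.map Complex.ofReal *
          ((Kx.map Complex.ofReal)⁻¹ + Aᴴ * Hᴴ * S⁻¹ * H * A)⁻¹ *
          (Q.map Complex.ofReal)ᵀ)).re ≤
      (Matrix.trace ((W * H * A - Q.map Complex.ofReal) * Kx.map Complex.ofReal *
          (W * H * A - Q.map Complex.ofReal)ᴴ)).re +
        (Matrix.trace (W * S * Wᴴ)).re := by
  intro W
  have hQ : (Q.map Complex.ofReal)ᵀ = (Q.map Complex.ofReal)ᴴ := by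
    ext
    simp
  have hB : Aᴴ * Hᴴ * S⁻¹ * H * A = (H * A)ᴴ * S⁻¹ * (H * A) := by
    simp only [conjTranspose_mul, Matrix.mul_assoc]
  have hKc : (Kx.map Complex.ofReal).PosDef := by
    simpa only [RCLike.ofReal_eq_complex_ofReal] using hKx.map_ofReal (𝕜 := ℂ)
  have hle := re_trace_mul_inv_add_le W (H * A) (Q.map Complex.ofReal) hKc hS
  rw [trace_add, map_add] at hle
  rw [hQ, hB, Matrix.mul_assoc W H A]
  simpa only [RCLike.re_to_complex] using hle

theorem stmt1 {n N M r K : ℕ} (hn : 0 < n) (hN : 0 < N) (hM : 0 < M) (hr : 0 < r)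
    (hK : 0 < K) (hNK : N = n * K)
    (Q : Matrix (Fin n) (Fin N) ℝ)
    (hQ : ∀ (i : Fin n) (j : Fin N), Q i j = if (j : ℕ) % n = (i : ℕ) then 1 else 0)
    (Kx : Matrix (Fin N) (Fin N) ℝ) (hKx : Kx.PosDef)
    (S : Matrix (Fin r) (Fin r) ℂ) (hS : S.PosDef)
    (H : Matrix (Fin r) (Fin M) ℂ) (A : Matrix (Fin M) (Fin N) ℂ) :
    ∀ W : Matrix (Fin n) (Fin r) ℂ,
      (Matrix.trace (Q.map Complex.ofReal *
          ((Kx.map Complex.ofReal)⁻¹ + Aᴴ * Hᴴ * S⁻¹ * H * A)⁻¹ *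
          (Q.map Complex.ofReal)ᵀ)).re ≤
      (Matrix.trace ((W * H * A - Q.map Complex.ofReal) * Kx.map Complex.ofReal *
          (W * H * A - Q.map Complex.ofReal)ᴴ)).re +
        (Matrix.trace (W * S * Wᴴ)).re :=
  stmt1_general Q Kx hKx S hS H A
end

section
/- Let J be a nonempty finite index set and for each j ∈ J let δ_j, λ_j, R_j be positive reals. Let P₀ > 0 and μ > 0, and define p̂_j = (1/(δ_j λ_j)) · max(0, √(δ_j λ_j R_j / μ) − 1) for each j ∈ J. Suppose Σ_{j∈J} δ_j p̂_j = P₀. Then for every family (p_j)_{j∈J} of nonnegative reals with Σ_{j∈J} δ_j p_j = P₀, one has Σ_{j∈J} δ_j R_j / (1 + δ_j λ_j p_j) ≥ Σ_{j∈J} δ_j R_j / (1 + δ_j λ_j p̂_j). -/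
/-! With the multiplier `μ`, each summand of the Lagrangian
`δ R / (1 + δ λ p) + μ δ p` depends on its own `p` only. Substituting `t = 1 + δ λ p ≥ 1`
it becomes `A / t + k t - k` with `A = δ R`, `k = μ / λ`, a convex function of `t` minimised
on `[1, ∞)` at `max 1 √(A / k) = 1 + δ λ p̂`. So `p̂` minimises the Lagrangian termwise, and
since both allocations spend the same power the multiplier terms cancel. -/

open Finset

theorem div_add_mul_max_one_sqrt_le {A k t : ℝ} (hA : 0 ≤ A) (hk : 0 < k) (ht : 1 ≤ t) :
    A / max 1 √(A / k) + k * max 1 √(A / k) ≤ A / t + k * t := by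
  have ht0 : 0 < t := by linarith
  rcases le_total √(A / k) 1 with hle | hgt
  · rw [max_eq_left hle]
    have hAk : A ≤ k := by
      rwa [Real.sqrt_le_one, div_le_one hk] at hle
    have hgap : A / t + k * t - (A / 1 + k * 1) = (t - 1) * (k - A / t) := by
      field_simp; ring
    have : 0 ≤ (t - 1) * (k - A / t) :=
      mul_nonneg (by linarith) (by linarith [div_le_self hA ht])
    linarith
  · rw [max_eq_right hgt]
    set s := √(A / k)
    have hs0 : 0 < s := by linarith
    have hA_eq : A = k * s ^ 2 := by
      rw [Real.sq_sqrt (div_nonneg hA hk.le)]; field_simp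
    have hgap : A / t + k * t - (A / s + k * s) = k * (t - s) ^ 2 / t := by
      rw [hA_eq]; field_simp; ring
    have : 0 ≤ k * (t - s) ^ 2 / t := by positivity
    linarith

theorem one_add_mul_waterfill {a x q : ℝ} (ha : 0 < a)
    (hq : q = (1 / a) * max 0 (√x - 1)) : 1 + a * q = max 1 √x := by
  rw [hq, ← mul_assoc, mul_one_div_cancel ha.ne', one_mul, ← sub_self (1 : ℝ),
    max_sub_sub_right]
  ring

theorem waterfill_lagrangian_le {δ lam R μ p q : ℝ} (hδ : 0 < δ) (hlam : 0 < lam)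
    (hR : 0 ≤ R) (hμ : 0 < μ) (hp : 0 ≤ p)
    (hq : q = (1 / (δ * lam)) * max 0 (√(δ * lam * R / μ) - 1)) :
    δ * R / (1 + δ * lam * q) + μ * (δ * q) ≤ δ * R / (1 + δ * lam * p) + μ * (δ * p) := by
  have hk : 0 < μ / lam := div_pos hμ hlam
  have hAk : δ * R / (μ / lam) = δ * lam * R / μ := by field_simp
  have hmin := div_add_mul_max_one_sqrt_le (mul_nonneg hδ.le hR) hk
    (le_add_of_nonneg_right (by positivity : 0 ≤ δ * lam * p))
  rw [hAk, ← one_add_mul_waterfill (mul_pos hδ hlam) hq] at hmin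
  have hcost : ∀ r, μ * (δ * r) = μ / lam * (1 + δ * lam * r) - μ / lam := fun r => by
    field_simp; ring
  rw [hcost p, hcost q]
  linarith

theorem stmt10_general {J : Type*} [Fintype J]
    (δ lam R : J → ℝ) (hδ : ∀ j, 0 < δ j) (hlam : ∀ j, 0 < lam j) (hR : ∀ j, 0 < R j)
    (P₀ μ : ℝ) (hμ : 0 < μ)
    (phat : J → ℝ)
    (hphat : ∀ j, phat j =
      (1 / (δ j * lam j)) * max 0 (Real.sqrt (δ j * lam j * R j / μ) - 1))
    (hpow : ∑ j, δ j * phat j = P₀) :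
    ∀ p : J → ℝ, (∀ j, 0 ≤ p j) → (∑ j, δ j * p j = P₀) →
      ∑ j, δ j * R j / (1 + δ j * lam j * phat j) ≤
        ∑ j, δ j * R j / (1 + δ j * lam j * p j) := by
  intro p hp hsum
  have hlagr : ∑ j, (δ j * R j / (1 + δ j * lam j * phat j) + μ * (δ j * phat j))
      ≤ ∑ j, (δ j * R j / (1 + δ j * lam j * p j) + μ * (δ j * p j)) :=
    sum_le_sum fun j _ =>
      waterfill_lagrangian_le (hδ j) (hlam j) (hR j).le hμ (hp j) (hphat j)
  rw [sum_add_distrib, sum_add_distrib, ← mul_sum, ← mul_sum, hpow, hsum] at hlagr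
  linarith

theorem stmt10 {J : Type*} [Fintype J] [Nonempty J]
    (δ lam R : J → ℝ) (hδ : ∀ j, 0 < δ j) (hlam : ∀ j, 0 < lam j) (hR : ∀ j, 0 < R j)
    (P₀ μ : ℝ) (hP₀ : 0 < P₀) (hμ : 0 < μ)
    (phat : J → ℝ)
    (hphat : ∀ j, phat j =
      (1 / (δ j * lam j)) * max 0 (Real.sqrt (δ j * lam j * R j / μ) - 1))
    (hpow : ∑ j, δ j * phat j = P₀) :
    ∀ p : J → ℝ, (∀ j, 0 ≤ p j) → (∑ j, δ j * p j = P₀) →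
      ∑ j, δ j * R j / (1 + δ j * lam j * phat j) ≤
        ∑ j, δ j * R j / (1 + δ j * lam j * p j) :=
  stmt10_general δ lam R hδ hlam hR P₀ μ hμ phat hphat hpow
end

section
/- Let n, N, M, r be positive integers with M ≤ N and N = nK for a positive integer K, and let Q be the n×N real matrix obtained by horizontally concatenating K copies of the n×n identity. Let S be an r×r complex Hermitian positive definite matrix and H an r×M complex matrix. Let U be an N×N real orthogonal matrix and Δ an N×N diagonal matrix with diagonal entries δ_1,…,δ_N > 0 such that Kx = U Δ Uᵀ; let V be an M×M complex unitary matrix and Λ an M×M diagonal matrix with real diagonal entries λ_1,…,λ_M such that Hᴴ S⁻¹ H = V Λ Vᴴ, where λ_j > 0 for j ≤ min(r,M) and λ_j = 0 for min(r,M) < j ≤ M. For j ∈ {1,…,N} set R_j = Σ_{i=1}^{n} ([QU]_{ij})², and assume R_j > 0 for j ≤ min(r,M). Let P₀ > 0 and μ > 0 be such that, with p̂_j = (1/(δ_j λ_j)) · max(0, √(δ_j λ_j R_j/μ) − 1) for j ≤ min(r,M) and p̂_j = 0 for min(r,M) < j ≤ M, one has Σ_{j=1}^{M} δ_j p̂_j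 = P₀. For φ = (φ_1,…,φ_M) ∈ ℂᴹ let Φ(φ) be the M×N matrix with Φ(φ)_{ji} = φ_j if i = j and 0 otherwise, and A(φ) = V Φ(φ) Uᵀ. Set φ̂_j = √(p̂_j). Then for every φ ∈ ℂᴹ with Σ_{j=1}^{M} δ_j |φ_j|² = P₀: Re Tr[Q (Kx⁻¹ + A(φ̂)ᴴ Hᴴ S⁻¹ H A(φ̂))⁻¹ Qᵀ] ≤ Re Tr[Q (Kx⁻¹ + A(φ)ᴴ Hᴴ S⁻¹ H A(φ))⁻¹ Qᵀ]. -/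
/-!
Conjugating by the orthogonal `U` and the unitary `V` diagonalises the problem: with
`p_j = |φ_j|²`, the matrix `Kx⁻¹ + Aᴴ Hᴴ S⁻¹ H A` is `U diag(δ_j⁻¹ + λ_j p_j) Uᵀ`, so the
aggregation error is the separable sum `Σ_j R_j (δ_j⁻¹ + λ_j p_j)⁻¹`. Adding the Lagrangian
term `μ δ_j p_j` turns each summand into `(μ / λ_j) (c / x + x - 1)` with `x = 1 + δ_j λ_j p_j ≥ 1`
and `c = δ_j λ_j R_j / μ`; over `x ≥ 1` this is minimised at `x = max 1 √c`, which is the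
water-filling power. Summing over `j`, the Lagrangian terms cancel because both allocations
spend exactly `P₀`.
-/

open Matrix
open scoped ComplexOrder

namespace Matrix

variable {m n : Type*} [Fintype n]

theorem map_ofReal_mul {o : Type*} (L : Matrix m n ℝ) (M : Matrix n o ℝ) :
    (L * M).map Complex.ofReal = L.map Complex.ofReal * M.map Complex.ofReal :=
  Matrix.map_mul (f := Complex.ofRealHom)

theorem transpose_mul_self_map_ofReal [DecidableEq n] {U : Matrix n n ℝ} (hU : Uᵀ * U = 1) :
    (U.map Complex.ofReal)ᵀ * U.map Complex.ofReal = 1 := by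
  rw [← transpose_map, ← map_ofReal_mul, hU]
  exact Matrix.map_one _ Complex.ofReal_zero Complex.ofReal_one

theorem inv_mul_mul_transpose [DecidableEq n] {R : Type*} [CommRing R] {U : Matrix n n R}
    (hU : Uᵀ * U = 1) (D : Matrix n n R) : (U * D * Uᵀ)⁻¹ = U * D⁻¹ * Uᵀ := by
  rw [Matrix.mul_inv_rev, Matrix.mul_inv_rev, inv_eq_left_inv hU,
    inv_eq_left_inv (mul_eq_one_comm.mp hU), Matrix.mul_assoc]

theorem inv_diagonal_of_ne_zero [DecidableEq n] {K : Type*} [Field K] {v : n → K}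
    (hv : ∀ i, v i ≠ 0) : (diagonal v)⁻¹ = diagonal fun i => (v i)⁻¹ :=
  inv_eq_left_inv (by simp [hv])

theorem trace_mul_diagonal_mul_transpose [Fintype m] [DecidableEq n] {R : Type*}
    [CommSemiring R] (B : Matrix m n R) (d : n → R) :
    trace (B * diagonal d * Bᵀ) = ∑ j, d j * ∑ i, B i j ^ 2 := by
  simp only [trace, diag_apply, mul_apply (M := B * diagonal d), mul_diagonal, transpose_apply,
    Finset.mul_sum]
  rw [Finset.sum_comm]
  exact Finset.sum_congr rfl fun j _ => Finset.sum_congr rfl fun i _ => by ring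

theorem re_trace_mul_inv_conj_diagonal_mul_transpose [Fintype m] [DecidableEq n]
    (Q : Matrix m n ℝ) {U : Matrix n n ℝ} (hU : Uᵀ * U = 1) {d : n → ℝ} (hd : ∀ j, d j ≠ 0) :
    (trace (Q.map Complex.ofReal *
        (U.map Complex.ofReal * diagonal (fun j => (d j : ℂ)) * (U.map Complex.ofReal)ᵀ)⁻¹ *
        (Q.map Complex.ofReal)ᵀ)).re = ∑ j, (d j)⁻¹ * ∑ i, (Q * U) i j ^ 2 := by
  rw [inv_mul_mul_transpose (transpose_mul_self_map_ofReal hU),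
    inv_diagonal_of_ne_zero (by simpa using hd)]
  have hQU : Q.map Complex.ofReal * (U.map Complex.ofReal *
        diagonal (fun j => ((d j : ℂ))⁻¹) * (U.map Complex.ofReal)ᵀ) * (Q.map Complex.ofReal)ᵀ =
      (Q * U).map Complex.ofReal * diagonal (fun j => ((d j : ℂ))⁻¹) *
        ((Q * U).map Complex.ofReal)ᵀ := by
    rw [map_ofReal_mul, transpose_mul]
    simp only [Matrix.mul_assoc]
  rw [hQU, trace_mul_diagonal_mul_transpose]
  simp only [map_apply]
  norm_cast

end Matrix

/-- `|φ_j|²`, extended by zero beyond `M` so that it is indexed like `δ`, `λ` and `R`. -/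
noncomputable def powerProfile {M : ℕ} (φ : Fin M → ℂ) (j : ℕ) : ℝ :=
  if h : j < M then ‖φ ⟨j, h⟩‖ ^ 2 else 0

section powerProfile

variable {M : ℕ} (φ : Fin M → ℂ)

@[simp]
theorem powerProfile_val (j : Fin M) : powerProfile φ j = ‖φ j‖ ^ 2 := by
  simp [powerProfile]

theorem powerProfile_of_le {j : ℕ} (hj : M ≤ j) : powerProfile φ j = 0 := by
  simp [powerProfile, hj.not_gt]

theorem powerProfile_nonneg (j : ℕ) : 0 ≤ powerProfile φ j := by
  unfold powerProfile
  split_ifs <;> positivity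

theorem mul_powerProfile_nonneg {lam : ℕ → ℝ} (hlam : ∀ j < M, 0 ≤ lam j) (j : ℕ) :
    0 ≤ lam j * powerProfile φ j := by
  rcases lt_or_ge j M with hj | hj
  · exact mul_nonneg (hlam j hj) (powerProfile_nonneg φ j)
  · rw [powerProfile_of_le φ hj, mul_zero]

theorem mul_powerProfile_eq_zero {K : ℕ} {lam : ℕ → ℝ}
    (hlam : ∀ j, K ≤ j → j < M → lam j = 0) {j : ℕ} (hj : K ≤ j) :
    lam j * powerProfile φ j = 0 := by
  rcases lt_or_ge j M with hjM | hjM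
  · rw [hlam j hj hjM, zero_mul]
  · rw [powerProfile_of_le φ hjM, mul_zero]

theorem sum_range_mul_powerProfile {N : ℕ} (hMN : M ≤ N) (w : ℕ → ℝ) :
    ∑ j ∈ Finset.range N, w j * powerProfile φ j = ∑ j : Fin M, w j * ‖φ j‖ ^ 2 := by
  rw [← Finset.sum_range_add_sum_Ico _ hMN, Finset.sum_eq_zero (s := Finset.Ico M N), add_zero,
    ← Fin.sum_univ_eq_sum_range (fun j => w j * powerProfile φ j)]
  · simp only [powerProfile_val]
  · intro j hj
    rw [powerProfile_of_le φ (Finset.mem_Ico.mp hj).1, mul_zero]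

theorem powerProfile_ofReal_sqrt {p : ℕ → ℝ} (hp : ∀ j, 0 ≤ p j) (hpM : ∀ j, M ≤ j → p j = 0) :
    powerProfile (fun j : Fin M => ((√(p j) : ℝ) : ℂ)) = p := by
  funext j
  rcases lt_or_ge j M with hj | hj
  · simp [powerProfile, hj, Real.sq_sqrt (hp j)]
  · rw [powerProfile_of_le _ hj, hpM j hj]

theorem conjTranspose_mul_diagonal_mul_eq_diagonal_powerProfile {N : ℕ} (lam : ℕ → ℝ)
    {Φ : Matrix (Fin M) (Fin N) ℂ}
    (hΦ : ∀ (j : Fin M) (i : Fin N), Φ j i = if (i : ℕ) = (j : ℕ) then φ j else 0) :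
    Φᴴ * diagonal (fun j : Fin M => (lam j : ℂ)) * Φ =
      diagonal (fun i : Fin N => ((lam i * powerProfile φ i : ℝ) : ℂ)) := by
  ext i i'
  rw [Matrix.mul_assoc, mul_apply]
  simp only [diagonal_mul, conjTranspose_apply, hΦ, powerProfile]
  by_cases hi : (i : ℕ) < M
  · rw [Finset.sum_eq_single ⟨i, hi⟩ fun k _ hk => by
      simp [show (i : ℕ) ≠ k from fun h => hk (Fin.ext h.symm)]]
    · by_cases hii : i = i'
      · subst hii
        simp only [diagonal_apply_eq, hi, dite_true, if_true, RCLike.star_def]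
        rw [mul_left_comm, Complex.conj_mul']
        push_cast
        rfl
      · simp [hii, Fin.val_eq_val, Ne.symm hii]
    · simp
  · have hk : ∀ k : Fin M, (i : ℕ) ≠ k := fun k h => hi (h ▸ k.isLt)
    by_cases hii : i = i'
    · subst hii
      simp [hk, hi]
    · simp [hk, hii]

end powerProfile

theorem precision_eq_conj_diagonal {r M N : ℕ} {U : Matrix (Fin N) (Fin N) ℝ} (hU : Uᵀ * U = 1)
    {δ : ℕ → ℝ} (hδ : ∀ j < N, δ j ≠ 0) {V : Matrix (Fin M) (Fin M) ℂ} (hV : Vᴴ * V = 1)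
    {S : Matrix (Fin r) (Fin r) ℂ} {H : Matrix (Fin r) (Fin M) ℂ} {lam : ℕ → ℝ}
    (hHSH : Hᴴ * S⁻¹ * H = V * diagonal (fun j : Fin M => (lam j : ℂ)) * Vᴴ)
    {φ : Fin M → ℂ} {Φ : Matrix (Fin M) (Fin N) ℂ}
    (hΦ : ∀ (j : Fin M) (i : Fin N), Φ j i = if (i : ℕ) = (j : ℕ) then φ j else 0) :
    ((U * diagonal (fun j : Fin N => δ j) * Uᵀ).map Complex.ofReal)⁻¹ +
        (V * Φ * (U.map Complex.ofReal)ᵀ)ᴴ * Hᴴ * S⁻¹ * H * (V * Φ * (U.map Complex.ofReal)ᵀ) =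
      U.map Complex.ofReal *
        diagonal (fun j : Fin N => (((δ j)⁻¹ + lam j * powerProfile φ j : ℝ) : ℂ)) *
        (U.map Complex.ofReal)ᵀ := by
  set Uc := U.map Complex.ofReal
  have hUcH : Ucᵀᴴ = Uc := by ext; simp [Uc]
  have hKx : (U * diagonal (fun j : Fin N => δ j) * Uᵀ).map Complex.ofReal =
      Uc * diagonal (fun j : Fin N => (δ j : ℂ)) * Ucᵀ := by
    rw [map_ofReal_mul, map_ofReal_mul, transpose_map, diagonal_map Complex.ofReal_zero]
  have hgain : (V * Φ * Ucᵀ)ᴴ * Hᴴ * S⁻¹ * H * (V * Φ * Ucᵀ) =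
      Uc * (Φᴴ * diagonal (fun j : Fin M => (lam j : ℂ)) * Φ) * Ucᵀ := by
    calc _ = Uc * Φᴴ * (Vᴴ * (Hᴴ * S⁻¹ * H) * V) * Φ * Ucᵀ := by
          simp only [conjTranspose_mul, hUcH, Matrix.mul_assoc]
      _ = _ := by
          rw [hHSH]
          simp only [← Matrix.mul_assoc, hV, Matrix.one_mul]
          simp only [Matrix.mul_assoc, hV, Matrix.mul_one]
  rw [hKx, inv_mul_mul_transpose (transpose_mul_self_map_ofReal hU),
    inv_diagonal_of_ne_zero (by simpa using fun j : Fin N => hδ j j.isLt), hgain,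
    conjTranspose_mul_diagonal_mul_eq_diagonal_powerProfile φ lam hΦ, ← Matrix.add_mul,
    ← Matrix.mul_add, diagonal_add]
  push_cast
  rfl

theorem re_trace_mmse_eq_sum {n r M N : ℕ} (Q : Matrix (Fin n) (Fin N) ℝ)
    {U : Matrix (Fin N) (Fin N) ℝ} (hU : Uᵀ * U = 1) {δ : ℕ → ℝ} (hδ : ∀ j < N, 0 < δ j)
    {Kx : Matrix (Fin N) (Fin N) ℝ} (hKx : Kx = U * diagonal (fun j : Fin N => δ j) * Uᵀ)
    {V : Matrix (Fin M) (Fin M) ℂ} (hV : Vᴴ * V = 1) {S : Matrix (Fin r) (Fin r) ℂ}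
    {H : Matrix (Fin r) (Fin M) ℂ} {lam : ℕ → ℝ}
    (hHSH : Hᴴ * S⁻¹ * H = V * diagonal (fun j : Fin M => (lam j : ℂ)) * Vᴴ)
    (hlam : ∀ j < M, 0 ≤ lam j) {R : ℕ → ℝ} (hR : ∀ j : Fin N, R j = ∑ i, (Q * U) i j ^ 2)
    {φ : Fin M → ℂ} {Φ : Matrix (Fin M) (Fin N) ℂ}
    (hΦ : ∀ (j : Fin M) (i : Fin N), Φ j i = if (i : ℕ) = (j : ℕ) then φ j else 0)
    {A : Matrix (Fin M) (Fin N) ℂ} (hA : A = V * Φ * (U.map Complex.ofReal)ᵀ) :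
    (trace (Q.map Complex.ofReal * ((Kx.map Complex.ofReal)⁻¹ + Aᴴ * Hᴴ * S⁻¹ * H * A)⁻¹ *
        (Q.map Complex.ofReal)ᵀ)).re =
      ∑ j ∈ Finset.range N, R j * ((δ j)⁻¹ + lam j * powerProfile φ j)⁻¹ := by
  have hd (j : Fin N) : (δ j)⁻¹ + lam j * powerProfile φ j ≠ 0 :=
    (add_pos_of_pos_of_nonneg (inv_pos.mpr (hδ j j.isLt)) (mul_powerProfile_nonneg φ hlam j)).ne'
  rw [hA, hKx, precision_eq_conj_diagonal hU (fun j hj => (hδ j hj).ne') hV hHSH hΦ,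
    re_trace_mul_inv_conj_diagonal_mul_transpose Q hU hd, ← Fin.sum_univ_eq_sum_range]
  simp only [hR, mul_comm]

noncomputable def waterFilling (δ lam R μ : ℝ) : ℝ :=
  1 / (δ * lam) * max 0 (√(δ * lam * R / μ) - 1)

theorem waterFilling_nonneg {δ lam : ℝ} (hδ : 0 ≤ δ) (hlam : 0 ≤ lam) (R μ : ℝ) :
    0 ≤ waterFilling δ lam R μ :=
  mul_nonneg (by positivity) (le_max_left _ _)

theorem div_max_one_sqrt_add_le {c x : ℝ} (hc : 0 ≤ c) (hx : 1 ≤ x) :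
    c / max 1 √c + max 1 √c ≤ c / x + x := by
  have hx0 : 0 < x := one_pos.trans_le hx
  have hsq : √c ^ 2 = c := Real.sq_sqrt hc
  rw [← sub_nonneg]
  rcases le_total √c 1 with hs | hs
  · have hc1 : c ≤ 1 := by nlinarith [Real.sqrt_nonneg c]
    have : c / x + x - (c / max 1 √c + max 1 √c) = (x - 1) * (x - c) / x := by
      rw [max_eq_left hs]; field_simp; ring
    rw [this]; exact div_nonneg (mul_nonneg (by linarith) (by linarith)) hx0.le
  · have hs0 : 0 < √c := one_pos.trans_le hs
    have : c / x + x - (c / max 1 √c + max 1 √c) = (x - √c) ^ 2 / x := by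
      rw [max_eq_right hs, Real.div_sqrt]; field_simp; rw [sub_sq, hsq]; ring
    rw [this]; positivity

theorem mse_add_cost_eq {R δ lam μ p : ℝ} (hδ : δ ≠ 0) (hlam : lam ≠ 0) (hμ : μ ≠ 0)
    (hp : 1 + δ * lam * p ≠ 0) :
    R * (δ⁻¹ + lam * p)⁻¹ + μ * (δ * p) =
      μ / lam * (δ * lam * R / μ / (1 + δ * lam * p) + (1 + δ * lam * p) - 1) := by
  have : δ⁻¹ + lam * p = (1 + δ * lam * p) / δ := by field_simp
  rw [this]
  field_simp
  ring

theorem waterFilling_add_le {R δ lam μ p : ℝ} (hR : 0 ≤ R) (hδ : 0 < δ) (hlam : 0 < lam)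
    (hμ : 0 < μ) (hp : 0 ≤ p) :
    R * (δ⁻¹ + lam * waterFilling δ lam R μ)⁻¹ + μ * (δ * waterFilling δ lam R μ) ≤
      R * (δ⁻¹ + lam * p)⁻¹ + μ * (δ * p) := by
  set c := δ * lam * R / μ
  have hopt : 1 + δ * lam * waterFilling δ lam R μ = max 1 √c := by
    rw [waterFilling, show max 0 (√c - 1) = max 1 √c - 1 by rw [← max_sub_sub_right, sub_self]]
    field_simp
    ring
  have hx : 1 ≤ 1 + δ * lam * p := le_add_of_nonneg_right (by positivity)
  rw [mse_add_cost_eq hδ.ne' hlam.ne' hμ.ne' (by rw [hopt]; positivity),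
    mse_add_cost_eq hδ.ne' hlam.ne' hμ.ne' (by linarith), hopt]
  have := div_max_one_sqrt_add_le (by positivity : 0 ≤ c) hx
  exact mul_le_mul_of_nonneg_left (by linarith) (by positivity)

theorem Finset.sum_le_sum_of_add_mul_le {ι : Type*} {s : Finset ι} {f g c d : ι → ℝ} (μ : ℝ)
    (h : ∀ i ∈ s, f i + μ * c i ≤ g i + μ * d i) (hcd : ∑ i ∈ s, c i = ∑ i ∈ s, d i) :
    ∑ i ∈ s, f i ≤ ∑ i ∈ s, g i := by
  have := Finset.sum_le_sum h
  rw [Finset.sum_add_distrib, Finset.sum_add_distrib, ← Finset.mul_sum, ← Finset.mul_sum,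
    hcd] at this
  linarith

theorem stmt14_general {n N M r : ℕ} (hMN : M ≤ N)
    (Q : Matrix (Fin n) (Fin N) ℝ)
    (S : Matrix (Fin r) (Fin r) ℂ)
    (H : Matrix (Fin r) (Fin M) ℂ)
    (U : Matrix (Fin N) (Fin N) ℝ) (hU : Uᵀ * U = 1)
    (δ : ℕ → ℝ) (hδ : ∀ j < N, 0 < δ j)
    (Kx : Matrix (Fin N) (Fin N) ℝ)
    (hKx : Kx = U * Matrix.diagonal (fun j : Fin N => δ (j : ℕ)) * Uᵀ)
    (V : Matrix (Fin M) (Fin M) ℂ) (hV : Vᴴ * V = 1)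
    (lam : ℕ → ℝ) (hlampos : ∀ j < min r M, 0 < lam j)
    (hlam0 : ∀ j, min r M ≤ j → j < M → lam j = 0)
    (hHSH : Hᴴ * S⁻¹ * H = V * Matrix.diagonal (fun j : Fin M => (lam (j : ℕ) : ℂ)) * Vᴴ)
    (R : ℕ → ℝ) (hR : ∀ j : Fin N, R (j : ℕ) = ∑ i, ((Q * U) i j) ^ 2)
    (hRpos : ∀ j < min r M, 0 < R j)
    (P₀ μ : ℝ) (hμ : 0 < μ)
    (phat : ℕ → ℝ)
    (hphat1 : ∀ j < min r M, phat j =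
      (1 / (δ j * lam j)) * max 0 (Real.sqrt (δ j * lam j * R j / μ) - 1))
    (hphat2 : ∀ j, min r M ≤ j → phat j = 0)
    (hpow : ∑ j ∈ Finset.range M, δ j * phat j = P₀)
    (Φ : (Fin M → ℂ) → Matrix (Fin M) (Fin N) ℂ)
    (hΦ : ∀ (φ : Fin M → ℂ) (j : Fin M) (i : Fin N),
      Φ φ j i = if (i : ℕ) = (j : ℕ) then φ j else 0)
    (A : (Fin M → ℂ) → Matrix (Fin M) (Fin N) ℂ)
    (hA : ∀ φ, A φ = V * Φ φ * (U.map Complex.ofReal)ᵀ)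
    (φhat : Fin M → ℂ) (hφhat : ∀ j, φhat j = (Real.sqrt (phat (j : ℕ)) : ℂ)) :
    ∀ φ : Fin M → ℂ, (∑ j : Fin M, δ (j : ℕ) * ‖φ j‖ ^ 2 = P₀) →
      (Matrix.trace (Q.map Complex.ofReal *
          ((Kx.map Complex.ofReal)⁻¹ + (A φhat)ᴴ * Hᴴ * S⁻¹ * H * A φhat)⁻¹ *
          (Q.map Complex.ofReal)ᵀ)).re ≤
        (Matrix.trace (Q.map Complex.ofReal *
          ((Kx.map Complex.ofReal)⁻¹ + (A φ)ᴴ * Hᴴ * S⁻¹ * H * A φ)⁻¹ *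
          (Q.map Complex.ofReal)ᵀ)).re := by
  intro φ hφ
  have hlam : ∀ j < M, 0 ≤ lam j := fun j hj =>
    (lt_or_ge j (min r M)).elim (fun h => (hlampos j h).le) fun h => (hlam0 j h hj).ge
  have hphat_nonneg (j : ℕ) : 0 ≤ phat j := by
    rcases lt_or_ge j (min r M) with h | h
    · rw [hphat1 j h]
      exact waterFilling_nonneg (hδ j ((h.trans_le (min_le_right r M)).trans_le hMN)).le
        (hlampos j h).le _ _
    · exact (hphat2 j h).ge
  have hphat : powerProfile φhat = phat := by
    rw [funext hφhat]
    exact powerProfile_ofReal_sqrt hphat_nonneg fun j hj => hphat2 j ((min_le_right r M).trans hj)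
  rw [re_trace_mmse_eq_sum Q hU hδ hKx hV hHSH hlam hR (hΦ φhat) (hA φhat),
    re_trace_mmse_eq_sum Q hU hδ hKx hV hHSH hlam hR (hΦ φ) (hA φ), hphat]
  refine Finset.sum_le_sum_of_add_mul_le μ (c := fun j => δ j * phat j)
    (d := fun j => δ j * powerProfile φ j) (fun j hj => ?_) ?_
  · have hδj := hδ j (Finset.mem_range.mp hj)
    rcases lt_or_ge j (min r M) with h | h
    · rw [hphat1 j h]
      exact waterFilling_add_le (hRpos j h).le hδj (hlampos j h) hμ (powerProfile_nonneg φ j)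
    · rw [hphat2 j h, mul_powerProfile_eq_zero φ hlam0 h]
      simp only [mul_zero, add_zero, le_add_iff_nonneg_right]
      exact mul_nonneg hμ.le (mul_nonneg hδj.le (powerProfile_nonneg φ j))
  · rw [sum_range_mul_powerProfile φ hMN, hφ, ← hpow, ← hphat,
      sum_range_mul_powerProfile φhat hMN, sum_range_mul_powerProfile φhat le_rfl]

theorem stmt14 {n N M r K : ℕ} (hn : 0 < n) (hN : 0 < N) (hM : 0 < M) (hr : 0 < r)
    (hK : 0 < K) (hMN : M ≤ N) (hNK : N = n * K)
    (Q : Matrix (Fin n) (Fin N) ℝ)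
    (hQ : ∀ (i : Fin n) (j : Fin N), Q i j = if (j : ℕ) % n = (i : ℕ) then 1 else 0)
    (S : Matrix (Fin r) (Fin r) ℂ) (hS : S.PosDef)
    (H : Matrix (Fin r) (Fin M) ℂ)
    (U : Matrix (Fin N) (Fin N) ℝ) (hU : Uᵀ * U = 1)
    (δ : ℕ → ℝ) (hδ : ∀ j < N, 0 < δ j)
    (Kx : Matrix (Fin N) (Fin N) ℝ)
    (hKx : Kx = U * Matrix.diagonal (fun j : Fin N => δ (j : ℕ)) * Uᵀ)
    (V : Matrix (Fin M) (Fin M) ℂ) (hV : Vᴴ * V = 1)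
    (lam : ℕ → ℝ) (hlampos : ∀ j < min r M, 0 < lam j)
    (hlam0 : ∀ j, min r M ≤ j → j < M → lam j = 0)
    (hHSH : Hᴴ * S⁻¹ * H = V * Matrix.diagonal (fun j : Fin M => (lam (j : ℕ) : ℂ)) * Vᴴ)
    (R : ℕ → ℝ) (hR : ∀ j : Fin N, R (j : ℕ) = ∑ i, ((Q * U) i j) ^ 2)
    (hRpos : ∀ j < min r M, 0 < R j)
    (P₀ μ : ℝ) (hP₀ : 0 < P₀) (hμ : 0 < μ)
    (phat : ℕ → ℝ)
    (hphat1 : ∀ j < min r M, phat j =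
      (1 / (δ j * lam j)) * max 0 (Real.sqrt (δ j * lam j * R j / μ) - 1))
    (hphat2 : ∀ j, min r M ≤ j → phat j = 0)
    (hpow : ∑ j ∈ Finset.range M, δ j * phat j = P₀)
    (Φ : (Fin M → ℂ) → Matrix (Fin M) (Fin N) ℂ)
    (hΦ : ∀ (φ : Fin M → ℂ) (j : Fin M) (i : Fin N),
      Φ φ j i = if (i : ℕ) = (j : ℕ) then φ j else 0)
    (A : (Fin M → ℂ) → Matrix (Fin M) (Fin N) ℂ)
    (hA : ∀ φ, A φ = V * Φ φ * (U.map Complex.ofReal)ᵀ)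
    (φhat : Fin M → ℂ) (hφhat : ∀ j, φhat j = (Real.sqrt (phat (j : ℕ)) : ℂ)) :
    ∀ φ : Fin M → ℂ, (∑ j : Fin M, δ (j : ℕ) * ‖φ j‖ ^ 2 = P₀) →
      (Matrix.trace (Q.map Complex.ofReal *
          ((Kx.map Complex.ofReal)⁻¹ + (A φhat)ᴴ * Hᴴ * S⁻¹ * H * A φhat)⁻¹ *
          (Q.map Complex.ofReal)ᵀ)).re ≤
        (Matrix.trace (Q.map Complex.ofReal *
          ((Kx.map Complex.ofReal)⁻¹ + (A φ)ᴴ * Hᴴ * S⁻¹ * H * A φ)⁻¹ *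
          (Q.map Complex.ofReal)ᵀ)).re :=
  stmt14_general hMN Q S H U hU δ hδ Kx hKx V hV lam hlampos hlam0 hHSH R hR hRpos P₀ μ hμ phat
    hphat1 hphat2 hpow Φ hΦ A hA φhat hφhat
end
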